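/- arXiv:1512.07526 — 5 statements merged into one kernel-verified Lean document; each statement's English description precedes it below -/
import Mathlib

section
/- Let X be a geodesic metric space and Λ a subset of X such that every metric ball of X disjoint from Λ has closest-point projection on Λ of diameter at most C. Then for any two points x, y of X and any closest-point projections π(x), π(y) of x, y on Λ, one has d(π(x), π(y)) ≤ max(C, 4·d(x,y)). -/
/-!
If `x` or `y` is within `d = d(x, y)` of `Λ`, the triangle inequality through `x` and `y` gives
`d(π(x), π(y)) ≤ 4d`. Otherwise the closed ball of radius `d / 2` around a midpoint of `x` and `y`
misses `Λ` and contains both `x` and `y`, so `π(x)` and `π(y)` both lie in its projection, whose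
diameter is at most `C`.
-/

def IsGeodesicMetricSpace (X : Type*) [MetricSpace X] : Prop :=
  ∀ x y : X, ∃ γ : ℝ → X, γ 0 = x ∧ γ (dist x y) = y ∧
    ∀ s ∈ Set.Icc (0 : ℝ) (dist x y), ∀ t ∈ Set.Icc (0 : ℝ) (dist x y),
      dist (γ s) (γ t) = |s - t|

open Metric

section

variable {X : Type*} [MetricSpace X]

theorem IsGeodesicMetricSpace.exists_midpoint (hX : IsGeodesicMetricSpace X) (x y : X) :
    ∃ m, dist x m = dist x y / 2 ∧ dist y m = dist x y / 2 := by
  obtain ⟨γ, hγ0, hγ1, hiso⟩ := hX x y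
  have hd : 0 ≤ dist x y := dist_nonneg
  have hmid : dist x y / 2 ∈ Set.Icc 0 (dist x y) := ⟨by linarith, by linarith⟩
  refine ⟨γ (dist x y / 2), ?_, ?_⟩
  · have h := hiso 0 ⟨le_rfl, hd⟩ _ hmid
    rw [hγ0, abs_of_nonpos (by linarith)] at h
    linarith
  · have h := hiso _ ⟨hd, le_rfl⟩ _ hmid
    rw [hγ1, abs_of_nonneg (by linarith)] at h
    linarith

def closestPoints (Λ B : Set X) : Set X :=
  {p | ∃ z ∈ B, p ∈ Λ ∧ dist z p = infDist z Λ}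

theorem closestPoints_closedBall_subset (Λ : Set X) (c : X) (r : ℝ) :
    closestPoints Λ (closedBall c r) ⊆ closedBall c (infDist c Λ + 2 * r) := by
  rintro p ⟨z, hz, -, hzp⟩
  rw [mem_closedBall] at hz ⊢
  have hzc : infDist z Λ ≤ infDist c Λ + dist z c := infDist_le_infDist_add_dist
  calc dist p c ≤ dist p z + dist z c := dist_triangle p z c
    _ ≤ infDist c Λ + 2 * r := by rw [dist_comm, hzp]; linarith

theorem isBounded_closestPoints_closedBall (Λ : Set X) (c : X) (r : ℝ) :
    Bornology.IsBounded (closestPoints Λ (closedBall c r)) :=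
  isBounded_closedBall.subset (closestPoints_closedBall_subset Λ c r)

theorem dist_le_four_mul_of_infDist_le {Λ : Set X} {x y πx πy : X}
    (hπx : dist x πx = infDist x Λ) (hπy : dist y πy = infDist y Λ)
    (hx : infDist x Λ ≤ dist x y) : dist πx πy ≤ 4 * dist x y := by
  have hy : infDist y Λ ≤ infDist x Λ + dist y x := infDist_le_infDist_add_dist
  rw [dist_comm y x] at hy
  calc dist πx πy ≤ dist πx x + dist x y + dist y πy := dist_triangle4 πx x y πy
    _ ≤ 4 * dist x y := by rw [dist_comm πx x, hπx, hπy]; linarith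

end

theorem coarsely_lipschitz_projection_general {X : Type*} [MetricSpace X]
    (hX : IsGeodesicMetricSpace X)
    (Λ : Set X)
    (C : ℝ)
    (hcontr : ∀ (c : X) (r : ℝ), Metric.closedBall c r ∩ Λ = ∅ →
      Metric.diam {p : X | ∃ z ∈ Metric.closedBall c r,
        p ∈ Λ ∧ dist z p = Metric.infDist z Λ} ≤ C)
    (x y πx πy : X)
    (hπx : πx ∈ Λ ∧ dist x πx = Metric.infDist x Λ)
    (hπy : πy ∈ Λ ∧ dist y πy = Metric.infDist y Λ) :
    dist πx πy ≤ max C (4 * dist x y) := by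
  by_cases hnear : infDist x Λ ≤ dist x y ∨ infDist y Λ ≤ dist x y
  · refine le_max_of_le_right ?_
    rcases hnear with hx | hy
    · exact dist_le_four_mul_of_infDist_le hπx.2 hπy.2 hx
    · rw [dist_comm πx, dist_comm x]
      exact dist_le_four_mul_of_infDist_le hπy.2 hπx.2 (dist_comm x y ▸ hy)
  push Not at hnear
  obtain ⟨m, hxm, hym⟩ := hX.exists_midpoint x y
  have hfar : dist x y / 2 < infDist m Λ := by
    have : infDist x Λ ≤ infDist m Λ + dist x m := infDist_le_infDist_add_dist
    linarith [hnear.1]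
  have hdisj : closedBall m (dist x y / 2) ∩ Λ = ∅ :=
    Set.disjoint_iff_inter_eq_empty.mp (disjoint_closedBall_of_lt_infDist hfar)
  have hπxS : πx ∈ closestPoints Λ (closedBall m (dist x y / 2)) :=
    ⟨x, mem_closedBall.mpr hxm.le, hπx⟩
  have hπyS : πy ∈ closestPoints Λ (closedBall m (dist x y / 2)) :=
    ⟨y, mem_closedBall.mpr hym.le, hπy⟩
  calc dist πx πy ≤ diam (closestPoints Λ (closedBall m (dist x y / 2))) :=
        dist_le_diam_of_mem (isBounded_closestPoints_closedBall _ _ _) hπxS hπyS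
    _ ≤ C := hcontr m _ hdisj
    _ ≤ max C (4 * dist x y) := le_max_left _ _

/-- If every ball disjoint from `Λ` projects on `Λ` to a set of diameter at most `C`,
then closest-point projections are coarsely Lipschitz:
`d(π(x), π(y)) ≤ max (C, 4 d(x,y))`. -/
theorem coarsely_lipschitz_projection {X : Type*} [MetricSpace X]
    (hX : IsGeodesicMetricSpace X)
    (Λ : Set X) (hclosed : IsClosed Λ) (hne : Λ.Nonempty)
    (hproj : ∀ z : X, ∃ p ∈ Λ, dist z p = Metric.infDist z Λ)
    (C : ℝ) (hC : 0 ≤ C)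
    (hcontr : ∀ (c : X) (r : ℝ), Metric.closedBall c r ∩ Λ = ∅ →
      Metric.diam {p : X | ∃ z ∈ Metric.closedBall c r,
        p ∈ Λ ∧ dist z p = Metric.infDist z Λ} ≤ C)
    (x y πx πy : X)
    (hπx : πx ∈ Λ ∧ dist x πx = Metric.infDist x Λ)
    (hπy : πy ∈ Λ ∧ dist y πy = Metric.infDist y Λ) :
    dist πx πy ≤ max C (4 * dist x y) :=
  coarsely_lipschitz_projection_general hX Λ C hcontr x y πx πy hπx hπy
end

section
/- In a geodesic metric space X, any strongly contracting quasi-geodesic Λ is Morse: for every K ≥ 1, L ≥ 0 there exists C(K,L) such that every (K,L)-quasi-geodesic with endpoints on Λ stays in the C(K,L)-neighbourhood of Λ. -/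
/-!
Let `R` be large compared with `L` and `C K²`, and look at a maximal stretch `[u, v]` of the
quasi-geodesic along which it stays `R`-far from `Λ`. Consecutive points of this stretch at
parameter distance `(R - L) / K` lie in a ball disjoint from `Λ`, so their projections are
`C`-close; chaining, the projections of `q u` and `q v` are at distance about
`C K (v - u) / (R - L) ≤ (v - u) / (2K)`. Since `q u` and `q v` are near `Λ`, comparing with the
lower quasi-geodesic bound `(v - u) / K - L ≤ d(q u, q v)` bounds `v - u`, hence how far the
stretch can get from `Λ`.
-/

open Metric Set

theorem dist_le_of_forall_abs_sub_le {Y : Type*} [PseudoMetricSpace Y] {g : ℝ → Y}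
    {a b δ C : ℝ} (hδ : 0 < δ) (hab : a ≤ b)
    (hg : ∀ x ∈ Icc a b, ∀ y ∈ Icc a b, |x - y| ≤ δ → dist (g x) (g y) ≤ C) :
    dist (g a) (g b) ≤ C * ((b - a) / δ + 1) := by
  have ha : a ∈ Icc a b := ⟨le_rfl, hab⟩
  have hC : 0 ≤ C := dist_self (g a) ▸ hg a ha a ha (by simp [hδ.le])
  have hsteps : ∀ n : ℕ, ∀ t ∈ Icc a b, t - a ≤ n * δ → dist (g a) (g t) ≤ C * n := by
    intro n
    induction n with
    | zero =>
      intro t ht hta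
      obtain rfl : t = a := by simp only [Nat.cast_zero, zero_mul] at hta; linarith [ht.1]
      simp
    | succ n ih =>
      intro t ht hta
      have ht' : max a (t - δ) ∈ Icc a b := ⟨le_max_left _ _, max_le hab (by linarith [ht.2])⟩
      have hprev : max a (t - δ) - a ≤ n * δ := by
        push_cast at hta
        rcases max_cases a (t - δ) with ⟨h, -⟩ | ⟨h, -⟩ <;> rw [h] <;> nlinarith
      have hlast : |max a (t - δ) - t| ≤ δ := by
        rw [abs_le]; constructor <;> linarith [le_max_right a (t - δ), ht'.1, ht.1,
          max_le ht.1 (by linarith : t - δ ≤ t)]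
      calc dist (g a) (g t) ≤ dist (g a) (g (max a (t - δ))) + dist (g (max a (t - δ))) (g t) :=
            dist_triangle _ _ _
        _ ≤ C * n + C := add_le_add (ih _ ht' hprev) (hg _ ht' t ht hlast)
        _ = C * (n + 1 : ℕ) := by push_cast; ring
  have hn : b - a ≤ ⌈(b - a) / δ⌉₊ * δ := (div_le_iff₀ hδ).1 (Nat.le_ceil _)
  calc dist (g a) (g b) ≤ C * ⌈(b - a) / δ⌉₊ := hsteps _ b ⟨hab, le_rfl⟩ hn
    _ ≤ C * ((b - a) / δ + 1) :=
      mul_le_mul_of_nonneg_left (Nat.ceil_lt_add_one (div_nonneg (sub_nonneg.2 hab) hδ.le)).le hC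

theorem exists_Icc_forall_lt_of_le_of_lt {f : ℝ → ℝ} {K L R a s : ℝ} (hK : 0 ≤ K)
    (has : a ≤ s) (hf : ∀ x ∈ Icc a s, ∀ y ∈ Icc a s, f x ≤ f y + (K * |x - y| + L))
    (ha : f a ≤ R) (hs : R < f s) :
    ∃ u ∈ Icc a s, f u ≤ R + 2 * K + L ∧ ∀ t ∈ Icc u s, R < f t := by
  set S := {t | t ∈ Icc a s ∧ f t ≤ R}
  have haS : a ∈ S := ⟨⟨le_rfl, has⟩, ha⟩
  have hS : BddAbove S := ⟨s, fun t ht => ht.1.2⟩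
  have hat₀ : a ≤ sSup S := le_csSup hS haS
  have hfar : ∀ t ∈ Ioc (sSup S) s, R < f t := fun t ht => lt_of_not_ge fun hft =>
    (le_csSup hS ⟨⟨hat₀.trans ht.1.le, ht.2⟩, hft⟩).not_gt ht.1
  obtain ⟨x, hxS, hx⟩ := exists_lt_of_lt_csSup ⟨a, haS⟩ (sub_one_lt (sSup S))
  have hxt₀ : x ≤ sSup S := le_csSup hS hxS
  have hu : min s (sSup S + 1) ∈ Icc a s := ⟨le_min has (by linarith), min_le_left _ _⟩
  refine ⟨min s (sSup S + 1), hu, ?_, fun t ht => ?_⟩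
  · have hxu : |min s (sSup S + 1) - x| ≤ 2 := by
      rw [abs_le]; constructor <;>
        linarith [le_min hxS.1.2 (by linarith : x ≤ sSup S + 1), min_le_right s (sSup S + 1)]
    nlinarith [hf _ hu x hxS.1, hxS.2]
  · rcases ht.2.eq_or_lt with rfl | hts
    · exact hs
    · have hlt : sSup S + 1 ≤ t := (min_le_iff.1 ht.1).resolve_left hts.not_ge
      exact hfar t ⟨by linarith, ht.2⟩

theorem exists_Icc_forall_lt_of_le_of_le_of_lt {f : ℝ → ℝ} {K L R a b s : ℝ} (hK : 0 ≤ K)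
    (hf : ∀ x ∈ Icc a b, ∀ y ∈ Icc a b, f x ≤ f y + (K * |x - y| + L))
    (ha : f a ≤ R) (hb : f b ≤ R) (hs : s ∈ Icc a b) (hfs : R < f s) :
    ∃ u ∈ Icc a s, ∃ v ∈ Icc s b, f u ≤ R + 2 * K + L ∧ f v ≤ R + 2 * K + L ∧
      ∀ t ∈ Icc u v, R < f t := by
  obtain ⟨u, hu, hfu, hu_far⟩ := exists_Icc_forall_lt_of_le_of_lt hK hs.1
    (fun x hx y hy => hf x ⟨hx.1, hx.2.trans hs.2⟩ y ⟨hy.1, hy.2.trans hs.2⟩) ha hfs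
  obtain ⟨v, hv, hfv, hv_far⟩ := exists_Icc_forall_lt_of_le_of_lt (f := fun t => f (-t)) hK
    (neg_le_neg hs.2)
    (fun x hx y hy => by
      simpa only [neg_sub_neg, abs_sub_comm] using
        hf (-x) ⟨by linarith [hx.2, hs.1], by linarith [hx.1]⟩
          (-y) ⟨by linarith [hy.2, hs.1], by linarith [hy.1]⟩)
    (by simpa only [neg_neg] using hb) (by simpa only [neg_neg] using hfs)
  refine ⟨u, hu, -v, ⟨by linarith [hv.2], by linarith [hv.1]⟩, hfu, hfv, fun t ht => ?_⟩
  rcases le_total t s with hts | hst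
  · exact hu_far t ⟨ht.1, hts⟩
  · simpa only [neg_neg] using hv_far (-t) ⟨by linarith [ht.2], by linarith⟩

section StrongContraction

variable {X : Type*} [MetricSpace X]

def closestPointProj (Λ B : Set X) : Set X :=
  {p | ∃ z ∈ B, p ∈ Λ ∧ dist z p = infDist z Λ}

def IsStronglyContracting (Λ : Set X) (C : ℝ) : Prop :=
  ∀ (c : X) (r : ℝ), closedBall c r ∩ Λ = ∅ → diam (closestPointProj Λ (closedBall c r)) ≤ C

def IsQuasiGeodesicOn (K L : ℝ) (q : ℝ → X) (I : Set ℝ) : Prop :=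
  ∀ s ∈ I, ∀ t ∈ I,
    (1 / K) * |s - t| - L ≤ dist (q s) (q t) ∧ dist (q s) (q t) ≤ K * |s - t| + L

theorem IsQuasiGeodesicOn.mono {K L : ℝ} {q : ℝ → X} {I J : Set ℝ}
    (hq : IsQuasiGeodesicOn K L q I) (hJ : J ⊆ I) : IsQuasiGeodesicOn K L q J :=
  fun s hs t ht => hq s (hJ hs) t (hJ ht)

theorem isBounded_closestPointProj {Λ B : Set X} (hB : Bornology.IsBounded B) :
    Bornology.IsBounded (closestPointProj Λ B) := by
  rcases B.eq_empty_or_nonempty with rfl | ⟨z₀, -⟩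
  · simp [closestPointProj]
  obtain ⟨ρ, hρ⟩ := (isBounded_iff_subset_closedBall z₀).1 hB
  refine (isBounded_iff_subset_closedBall z₀).2 ⟨infDist z₀ Λ + 2 * ρ, ?_⟩
  rintro p ⟨z, hz, -, hzp⟩
  have hzz₀ : dist z z₀ ≤ ρ := hρ hz
  calc dist p z₀ ≤ dist z p + dist z z₀ := dist_triangle_left _ _ _
    _ ≤ infDist z₀ Λ + dist z z₀ + dist z z₀ := by
      rw [hzp]; gcongr; exact infDist_le_infDist_add_dist
    _ ≤ infDist z₀ Λ + 2 * ρ := by linarith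

namespace IsStronglyContracting

variable {Λ : Set X} {C : ℝ}

theorem nonneg (h : IsStronglyContracting Λ C) (x : X) : 0 ≤ C :=
  diam_nonneg.trans <| h x (-1) <| by rw [closedBall_eq_empty.2 (by norm_num)]; exact empty_inter Λ

theorem dist_le {z z' p p' : X} {r : ℝ} (h : IsStronglyContracting Λ C)
    (hz : r < infDist z Λ) (hzz' : dist z z' ≤ r)
    (hp : p ∈ Λ) (hzp : dist z p = infDist z Λ) (hp' : p' ∈ Λ) (hzp' : dist z' p' = infDist z' Λ) :
    dist p p' ≤ C := by
  have hdisj : closedBall z r ∩ Λ = ∅ := eq_empty_of_forall_notMem fun w ⟨hw, hwΛ⟩ =>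
    ((infDist_le_dist_of_mem hwΛ).trans (mem_closedBall'.1 hw)).not_gt hz
  have hpP : p ∈ closestPointProj Λ (closedBall z r) :=
    ⟨z, mem_closedBall_self (dist_nonneg.trans hzz'), hp, hzp⟩
  have hp'P : p' ∈ closestPointProj Λ (closedBall z r) := ⟨z', mem_closedBall'.2 hzz', hp', hzp'⟩
  exact (dist_le_diam_of_mem (isBounded_closestPointProj isBounded_closedBall) hpP hp'P).trans
    (h z r hdisj)

theorem sub_le_of_forall_lt_infDist (h : IsStronglyContracting Λ C)
    (hproj : ∀ z : X, ∃ p ∈ Λ, dist z p = infDist z Λ)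
    {q : ℝ → X} {K L R D u v : ℝ} (hK : 0 < K) (huv : u ≤ v)
    (hq : IsQuasiGeodesicOn K L q (Icc u v)) (hLR : L < R) (hCR : 2 * C * K ^ 2 ≤ R - L)
    (hfar : ∀ t ∈ Icc u v, R < infDist (q t) Λ)
    (hu : infDist (q u) Λ ≤ D) (hv : infDist (q v) Λ ≤ D) :
    v - u ≤ 2 * K * (2 * D + C + L) := by
  choose π hπΛ hπ using hproj
  have hδ : 0 < (R - L) / K := div_pos (sub_pos.2 hLR) hK
  have hchain : dist (π (q u)) (π (q v)) ≤ C * ((v - u) / ((R - L) / K) + 1) :=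
    dist_le_of_forall_abs_sub_le hδ huv fun x hx y hy hxy => by
      have hxy' : dist (q x) (q y) ≤ R :=
        calc dist (q x) (q y) ≤ K * |x - y| + L := (hq x hx y hy).2
          _ ≤ K * ((R - L) / K) + L := by gcongr
          _ = R := by field_simp; ring
      exact h.dist_le (hfar x hx) hxy' (hπΛ _) (hπ _) (hπΛ _) (hπ _)
  have hupper : dist (q u) (q v) ≤ D + C * ((v - u) / ((R - L) / K) + 1) + D :=
    calc dist (q u) (q v)
        ≤ dist (q u) (π (q u)) + dist (π (q u)) (π (q v)) + dist (π (q v)) (q v) :=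
          dist_triangle4 _ _ _ _
      _ ≤ D + C * ((v - u) / ((R - L) / K) + 1) + D := by
          rw [hπ, dist_comm (π (q v)), hπ]; gcongr
  have hlower : (1 / K) * (v - u) - L ≤ dist (q u) (q v) := by
    simpa only [abs_sub_comm u v, abs_of_nonneg (sub_nonneg.2 huv)] using
      (hq u ⟨le_rfl, huv⟩ v ⟨huv, le_rfl⟩).1
  -- the choice `2 C K² ≤ R - L` makes the chained projection bound half the lower bound
  have habsorb : C * ((v - u) / ((R - L) / K)) ≤ (v - u) / (2 * K) := by
    rw [div_div_eq_mul_div, mul_div_assoc', div_le_div_iff₀ (sub_pos.2 hLR) (by positivity)]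
    nlinarith [mul_le_mul_of_nonneg_left hCR (sub_nonneg.2 huv)]
  have hhalf : (v - u) / (2 * K) ≤ 2 * D + C + L := by
    have : (1 / K) * (v - u) = (v - u) / (2 * K) + (v - u) / (2 * K) := by field_simp; ring
    linarith
  calc v - u = 2 * K * ((v - u) / (2 * K)) := by field_simp
    _ ≤ 2 * K * (2 * D + C + L) := by gcongr

end IsStronglyContracting

end StrongContraction

theorem strongly_contracting_implies_Morse_general {X : Type*} [MetricSpace X]
    (Λ : Set X)
    (hproj : ∀ z : X, ∃ p ∈ Λ, dist z p = Metric.infDist z Λ)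
    -- strong contraction: balls disjoint from `Λ` project to sets of diameter `≤ C`
    (C : ℝ)
    (hcontr : ∀ (c : X) (r : ℝ), Metric.closedBall c r ∩ Λ = ∅ →
      Metric.diam {p : X | ∃ z ∈ Metric.closedBall c r,
        p ∈ Λ ∧ dist z p = Metric.infDist z Λ} ≤ C) :
    ∀ K : ℝ, 1 ≤ K → ∀ L : ℝ, 0 ≤ L → ∃ C' : ℝ,
      ∀ (q : ℝ → X) (a b : ℝ), a ≤ b → q a ∈ Λ → q b ∈ Λ →
        (∀ s ∈ Set.Icc a b, ∀ t ∈ Set.Icc a b,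
          (1 / K) * |s - t| - L ≤ dist (q s) (q t) ∧
          dist (q s) (q t) ≤ K * |s - t| + L) →
        ∀ s ∈ Set.Icc a b, Metric.infDist (q s) Λ ≤ C' := by
  intro K hK L hL
  have hcontr : IsStronglyContracting Λ C := hcontr
  set R := L + 2 * C * K ^ 2 + 1
  set D := R + 2 * K + L
  refine ⟨D + L + 2 * K ^ 2 * (2 * D + C + L), fun q a b _ hqa hqb hq s hs => ?_⟩
  have hC : 0 ≤ C := hcontr.nonneg (q a)
  have hCK : 0 ≤ 2 * C * K ^ 2 := by positivity
  have hbound : 0 ≤ 2 * K ^ 2 * (2 * D + C + L) := by positivity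
  by_cases hnear : infDist (q s) Λ ≤ R
  · linarith
  obtain ⟨u, hu, v, hv, hdu, hdv, hfar⟩ :=
    exists_Icc_forall_lt_of_le_of_le_of_lt (f := fun t => infDist (q t) Λ) (K := K) (L := L)
      (R := R) (by linarith)
      (fun x _ y _ => infDist_le_infDist_add_dist.trans (by gcongr; exact (hq x ‹_› y ‹_›).2))
      (by simp only [infDist_zero_of_mem hqa]; positivity)
      (by simp only [infDist_zero_of_mem hqb]; positivity) hs (not_le.1 hnear)
  have hlen : v - u ≤ 2 * K * (2 * D + C + L) :=
    hcontr.sub_le_of_forall_lt_infDist hproj (by linarith) (hu.2.trans hv.1)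
      (IsQuasiGeodesicOn.mono hq (Icc_subset_Icc hu.1 hv.2)) (by linarith) (by linarith)
      hfar hdu hdv
  calc infDist (q s) Λ ≤ infDist (q u) Λ + (K * |s - u| + L) :=
        infDist_le_infDist_add_dist.trans (by gcongr; exact (hq s hs u ⟨hu.1, hu.2.trans hs.2⟩).2)
    _ ≤ D + (K * (2 * K * (2 * D + C + L)) + L) := by
        rw [abs_of_nonneg (sub_nonneg.2 hu.2)]
        gcongr
        linarith [hv.1]
    _ = D + L + 2 * K ^ 2 * (2 * D + C + L) := by ring

/-- A strongly contracting quasi-geodesic is Morse: for all `K ≥ 1`, `L ≥ 0`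
there is `C'` such that every `(K,L)`-quasi-geodesic with endpoints on `Λ`
stays in the `C'`-neighbourhood of `Λ`. -/
theorem strongly_contracting_implies_Morse {X : Type*} [MetricSpace X]
    (hgeo : IsGeodesicMetricSpace X)
    (Λ : Set X)
    -- `Λ` is the image of a quasi-isometric embedding of an interval of `ℝ`
    (hΛ : ∃ (K₀ L₀ : ℝ) (I : Set ℝ) (c : ℝ → X), 1 ≤ K₀ ∧ 0 ≤ L₀ ∧
      I.OrdConnected ∧ Λ = c '' I ∧
      ∀ s ∈ I, ∀ t ∈ I,
        (1 / K₀) * |s - t| - L₀ ≤ dist (c s) (c t) ∧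
        dist (c s) (c t) ≤ K₀ * |s - t| + L₀)
    (hproj : ∀ z : X, ∃ p ∈ Λ, dist z p = Metric.infDist z Λ)
    -- strong contraction: balls disjoint from `Λ` project to sets of diameter `≤ C`
    (C : ℝ) (hC : 0 ≤ C)
    (hcontr : ∀ (c : X) (r : ℝ), Metric.closedBall c r ∩ Λ = ∅ →
      Metric.diam {p : X | ∃ z ∈ Metric.closedBall c r,
        p ∈ Λ ∧ dist z p = Metric.infDist z Λ} ≤ C) :
    ∀ K : ℝ, 1 ≤ K → ∀ L : ℝ, 0 ≤ L → ∃ C' : ℝ,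
      ∀ (q : ℝ → X) (a b : ℝ), a ≤ b → q a ∈ Λ → q b ∈ Λ →
        (∀ s ∈ Set.Icc a b, ∀ t ∈ Set.Icc a b,
          (1 / K) * |s - t| - L ≤ dist (q s) (q t) ∧
          dist (q s) (q t) ≤ K * |s - t| + L) →
        ∀ s ∈ Set.Icc a b, Metric.infDist (q s) Λ ≤ C' :=
  strongly_contracting_implies_Morse_general Λ hproj C hcontr
end

section
/- Let G be a group acting by isometries on a geodesic metric space X, and let g ∈ G be a Morse element (infinite order, quasi-isometrically embedded orbits, with Morse orbits). If for every r ≥ 0 and every x ∈ X there exists m₀ such that only finitely many h ∈ G satisfy d(x,hx) ≤ r and d(g^{m₀}x, h g^{m₀}x) ≤ r, then for every r ≥ 0 and x ∈ X there exists m₀ such that for ALL m ≥ m₀, only finitely many h ∈ G satisfy d(x,hx) ≤ r and d(g^{m}x, h g^{m}x) ≤ r. -/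
/-!
Fix `x` and a radius `r`. If `h` moves both `x` and `gᵐx` by at most `r`, then the path which
starts at `x`, runs along the translated orbit `h gⁿ x` and ends at `gᵐx` is a quasi-geodesic
with constants independent of `h` and `m`, so by the Morse property the point `h g^{m₀} x` lies
within a uniform distance `ρ` of some `gᵏx`. Quasi-isometry of the orbit leaves finitely many
possible `k`, and for each `k` any two such `h` differ by an element moving `x` and `g^{m₀}x`
by at most `2ρ`, of which there are finitely many by the WPD condition at `m₀`.
-/

open Set Metric

section

variable {α X : Type*} [PseudoMetricSpace α] [PseudoMetricSpace X]

def QuasiIsometricOn (K L : ℝ) (f : α → X) (s : Set α) : Prop :=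
  ∀ a ∈ s, ∀ b ∈ s,
    (1 / K) * dist a b - L ≤ dist (f a) (f b) ∧ dist (f a) (f b) ≤ K * dist a b + L

def IsMorseWith (K L C : ℝ) (S : Set X) : Prop :=
  ∀ (q : ℝ → X) (a b : ℝ), a ≤ b → q a ∈ S → q b ∈ S → QuasiIsometricOn K L q (Icc a b) →
    ∀ s ∈ Icc a b, infDist (q s) S ≤ C

theorem QuasiIsometricOn.of_dist_floor_le {K L r : ℝ} {p : ℤ → X} {q : ℝ → X} {s : Set ℝ}
    (hK : 1 ≤ K) (hp : QuasiIsometricOn K L p univ) (hq : ∀ t ∈ s, dist (q t) (p ⌊t⌋) ≤ r) :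
    QuasiIsometricOn K (L + 2 * (K + r)) q s := by
  intro t ht u hu
  have hfloor : ∀ t : ℝ, dist (⌊t⌋ : ℝ) t ≤ 1 := fun t => by
    rw [Real.dist_eq, abs_le]
    constructor <;> linarith [Int.floor_le t, Int.lt_floor_add_one t]
  have hindex_le : dist ⌊t⌋ ⌊u⌋ ≤ dist t u + 2 := by
    rw [← Int.dist_cast_real]
    linarith [dist_triangle4 (⌊t⌋ : ℝ) t u ⌊u⌋, hfloor t, hfloor u, dist_comm (⌊u⌋ : ℝ) u]
  have hindex_ge : dist t u ≤ dist ⌊t⌋ ⌊u⌋ + 2 := by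
    rw [← Int.dist_cast_real]
    linarith [dist_triangle4 t ⌊t⌋ ⌊u⌋ u, hfloor t, hfloor u, dist_comm (⌊t⌋ : ℝ) t]
  have hq_le := dist_triangle4 (q t) (p ⌊t⌋) (p ⌊u⌋) (q u)
  have hq_ge := dist_triangle4 (p ⌊t⌋) (q t) (q u) (p ⌊u⌋)
  rw [dist_comm (p ⌊u⌋)] at hq_le
  rw [dist_comm (p ⌊t⌋) (q t)] at hq_ge
  obtain ⟨hlower, hupper⟩ := hp ⌊t⌋ trivial ⌊u⌋ trivial
  have hK₀ : 0 < K := by linarith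
  have hKinv : 1 / K ≤ 1 := by rw [div_le_one hK₀]; exact hK
  have hscale_lower := mul_le_mul_of_nonneg_left hindex_ge (one_div_nonneg.mpr hK₀.le)
  have hscale_upper := mul_le_mul_of_nonneg_left hindex_le hK₀.le
  constructor <;> nlinarith [hq t ht, hq u hu]

theorem IsMorseWith.infDist_le {K L C r : ℝ} {p p' : ℤ → X} {m n : ℤ} (hK : 1 ≤ K)
    (hMorse : IsMorseWith K (L + 2 * (K + r)) C (range p)) (hp' : QuasiIsometricOn K L p' univ)
    (h₀ : dist (p 0) (p' 0) ≤ r) (hm : dist (p m) (p' m) ≤ r) (hn₀ : 0 ≤ n) (hnm : n ≤ m) :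
    infDist (p' n) (range p) ≤ C + r := by
  have hr : 0 ≤ r := dist_nonneg.trans h₀
  set q : ℝ → X := fun t => if t = 0 then p 0 else if t = m then p m else p' ⌊t⌋
  have hq : ∀ t, dist (q t) (p' ⌊t⌋) ≤ r := by
    intro t
    simp only [q]
    split_ifs with ht₀ htm
    · simpa [ht₀] using h₀
    · simpa [htm] using hm
    · simpa using hr
  have hq₀ : q 0 ∈ range p := by simp [q]
  have hqm : q m ∈ range p := by simp only [q]; split_ifs <;> exact mem_range_self _
  have hqn := hMorse q 0 m (by exact_mod_cast hn₀.trans hnm) hq₀ hqm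
    (hp'.of_dist_floor_le hK fun t _ => hq t) n
    ⟨by exact_mod_cast hn₀, by exact_mod_cast hnm⟩
  calc infDist (p' n) (range p) ≤ infDist (q n) (range p) + dist (p' n) (q n) :=
        infDist_le_infDist_add_dist
    _ ≤ C + r := add_le_add hqn (by simpa [dist_comm] using hq n)

theorem QuasiIsometricOn.finite_setOf_dist_le [ProperSpace α] [DiscreteTopology α] {K L : ℝ}
    {p : α → X} (hK : 0 < K) (hp : QuasiIsometricOn K L p univ) (a : α) (y : X) (D : ℝ) :
    {k | dist (p k) y ≤ D}.Finite := by
  refine (isCompact_closedBall a (K * (D + dist (p a) y + L))).finite_of_discrete.subset ?_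
  intro k (hk : dist (p k) y ≤ D)
  have hlower := (hp k trivial a trivial).1
  have hscaled : (1 / K) * dist k a ≤ D + dist (p a) y + L := by
    linarith [hk, dist_triangle (p k) y (p a), dist_comm y (p a)]
  calc dist k a = K * ((1 / K) * dist k a) := by field_simp
    _ ≤ K * (D + dist (p a) y + L) := mul_le_mul_of_nonneg_left hscaled hK.le

variable {G : Type*} [Group G] [MulAction G X] [IsIsometricSMul G X]

theorem finite_setOf_dist_smul_le {x y z w : X} {R : ℝ}
    (hfin : {u : G | dist x (u • x) ≤ 2 * R ∧ dist y (u • y) ≤ 2 * R}.Finite) :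
    {h : G | dist z (h • x) ≤ R ∧ dist w (h • y) ≤ R}.Finite := by
  rcases eq_empty_or_nonempty {h : G | dist z (h • x) ≤ R ∧ dist w (h • y) ≤ R}
    with hempty | ⟨h₀, hz₀, hw₀⟩
  · rw [hempty]
    exact finite_empty
  refine (hfin.image (h₀ * ·)).subset ?_
  rintro h ⟨hz, hw⟩
  refine ⟨h₀⁻¹ * h, ⟨?_, ?_⟩, mul_inv_cancel_left h₀ h⟩
  · rw [← dist_smul h₀, smul_smul, mul_inv_cancel_left]
    linarith [dist_triangle_left (h₀ • x) (h • x) z]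
  · rw [← dist_smul h₀, smul_smul, mul_inv_cancel_left]
    linarith [dist_triangle_left (h₀ • y) (h • y) w]

theorem setOf_dist_smul_le_subset_biUnion {g : G} {x : X} {K L C r ρ : ℝ} {m n : ℕ}
    (hK : 1 ≤ K) (hp : QuasiIsometricOn K L (fun k : ℤ => g ^ k • x) univ)
    (hMorse : IsMorseWith K (L + 2 * (K + r)) C (range fun k : ℤ => g ^ k • x))
    (hC : 0 ≤ C) (hρ : C + r < ρ) (hnm : n ≤ m) :
    {h : G | dist x (h • x) ≤ r ∧ dist (g ^ m • x) (h • (g ^ m • x)) ≤ r} ⊆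
      ⋃ k ∈ {k : ℤ | dist (g ^ k • x) x ≤ ρ + dist (g ^ n • x) x + ρ},
        {h : G | dist x (h • x) ≤ ρ ∧ dist (g ^ k • x) (h • (g ^ n • x)) ≤ ρ} := by
  rintro h ⟨hx, hxm⟩
  have hp' : QuasiIsometricOn K L (fun k : ℤ => h • g ^ k • x) univ := fun a _ b _ => by
    simpa only [dist_smul] using hp a trivial b trivial
  have hnear := hMorse.infDist_le hK hp' (m := m) (n := n) (by simpa using hx)
    (by simpa using hxm) (by positivity) (by exact_mod_cast hnm)
  obtain ⟨_, ⟨k, rfl⟩, hk⟩ := (infDist_lt_iff (range_nonempty _)).1 (hnear.trans_lt hρ)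
  simp only [zpow_natCast] at hk
  rw [dist_comm] at hk
  refine mem_biUnion (x := k) ?_ ⟨hx.trans (by linarith), hk.le⟩
  show dist (g ^ k • x) x ≤ ρ + dist (g ^ n • x) x + ρ
  have := dist_triangle4 (g ^ k • x) (h • g ^ n • x) (h • x) x
  rw [dist_smul] at this
  linarith [dist_comm (h • x) x]

end

theorem wpd_single_implies_uniform_general {G X : Type*} [Group G] [MetricSpace X]
    [MulAction G X]
    (hiso : ∀ (k : G) (p q : X), dist (k • p) (k • q) = dist p q)
    (g : G)
    -- quasi-isometrically embedded orbits
    (hqi : ∀ x : X, ∃ K L : ℝ, 1 ≤ K ∧ 0 ≤ L ∧ ∀ m n : ℤ,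
      (1 / K) * |(m : ℝ) - n| - L ≤ dist (g ^ m • x) (g ^ n • x) ∧
      dist (g ^ m • x) (g ^ n • x) ≤ K * |(m : ℝ) - n| + L)
    -- Morse orbits
    (hMorse : ∀ x : X, ∀ K : ℝ, 1 ≤ K → ∀ L : ℝ, 0 ≤ L → ∃ C : ℝ,
      ∀ (q : ℝ → X) (a b : ℝ), a ≤ b →
        (∃ m : ℤ, q a = g ^ m • x) → (∃ m : ℤ, q b = g ^ m • x) →
        (∀ s ∈ Set.Icc a b, ∀ t ∈ Set.Icc a b,
          (1 / K) * |s - t| - L ≤ dist (q s) (q t) ∧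
          dist (q s) (q t) ≤ K * |s - t| + L) →
        ∀ s ∈ Set.Icc a b,
          Metric.infDist (q s) (Set.range fun m : ℤ => g ^ m • x) ≤ C)
    -- WPD at a single exponent
    (hWPD : ∀ r : ℝ, 0 ≤ r → ∀ x : X, ∃ m₀ : ℕ,
      {h : G | dist x (h • x) ≤ r ∧
        dist (g ^ m₀ • x) (h • (g ^ m₀ • x)) ≤ r}.Finite) :
    -- uniform WPD for all large exponents
    ∀ r : ℝ, 0 ≤ r → ∀ x : X, ∃ m₀ : ℕ, ∀ m : ℕ, m₀ ≤ m →
      {h : G | dist x (h • x) ≤ r ∧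
        dist (g ^ m • x) (h • (g ^ m • x)) ≤ r}.Finite := by
  intro r hr x
  have : IsIsometricSMul G X := ⟨fun k => Isometry.of_dist_eq (hiso k)⟩
  obtain ⟨K, L, hK, hL, hQI⟩ := hqi x
  have hp : QuasiIsometricOn K L (fun n : ℤ => g ^ n • x) univ := fun m _ n _ => by
    simpa [Int.dist_eq] using hQI m n
  obtain ⟨C, hC⟩ := hMorse x K hK (L + 2 * (K + r)) (by positivity)
  have hMorse_orbit :
      IsMorseWith K (L + 2 * (K + r)) (max C 0) (range fun n : ℤ => g ^ n • x) :=
    fun q a b hab ha hb hq s hs =>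
      (hC q a b hab (ha.imp fun _ => Eq.symm) (hb.imp fun _ => Eq.symm)
        (fun s hs t ht => by simpa [Real.dist_eq] using hq s hs t ht) s hs).trans
        (le_max_left C 0)
  obtain ⟨m₀, hfin⟩ := hWPD (2 * (max C 0 + r + 1)) (by positivity) x
  refine ⟨m₀, fun m hm => ?_⟩
  refine Set.Finite.subset ?_ (setOf_dist_smul_le_subset_biUnion hK hp hMorse_orbit
    (le_max_right C 0) (lt_add_one _) hm)
  exact (hp.finite_setOf_dist_le (by positivity) 0 x _).biUnion
    fun k _ => finite_setOf_dist_smul_le hfin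

/-- For a Morse element `g` (infinite order, quasi-isometrically embedded orbits,
Morse orbits) of a group acting by isometries on a geodesic metric space,
the WPD condition at a single exponent implies the uniform WPD condition
for all sufficiently large exponents. -/
theorem wpd_single_implies_uniform {G X : Type*} [Group G] [MetricSpace X]
    [MulAction G X]
    (hiso : ∀ (k : G) (p q : X), dist (k • p) (k • q) = dist p q)
    (hgeo : ∀ x y : X, ∃ γ : ℝ → X, γ 0 = x ∧ γ (dist x y) = y ∧
      ∀ s ∈ Set.Icc (0 : ℝ) (dist x y), ∀ t ∈ Set.Icc (0 : ℝ) (dist x y),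
        dist (γ s) (γ t) = |s - t|)
    (g : G)
    -- infinite order
    (hord : ∀ n : ℤ, n ≠ 0 → g ^ n ≠ 1)
    -- quasi-isometrically embedded orbits
    (hqi : ∀ x : X, ∃ K L : ℝ, 1 ≤ K ∧ 0 ≤ L ∧ ∀ m n : ℤ,
      (1 / K) * |(m : ℝ) - n| - L ≤ dist (g ^ m • x) (g ^ n • x) ∧
      dist (g ^ m • x) (g ^ n • x) ≤ K * |(m : ℝ) - n| + L)
    -- Morse orbits
    (hMorse : ∀ x : X, ∀ K : ℝ, 1 ≤ K → ∀ L : ℝ, 0 ≤ L → ∃ C : ℝ,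
      ∀ (q : ℝ → X) (a b : ℝ), a ≤ b →
        (∃ m : ℤ, q a = g ^ m • x) → (∃ m : ℤ, q b = g ^ m • x) →
        (∀ s ∈ Set.Icc a b, ∀ t ∈ Set.Icc a b,
          (1 / K) * |s - t| - L ≤ dist (q s) (q t) ∧
          dist (q s) (q t) ≤ K * |s - t| + L) →
        ∀ s ∈ Set.Icc a b,
          Metric.infDist (q s) (Set.range fun m : ℤ => g ^ m • x) ≤ C)
    -- WPD at a single exponent
    (hWPD : ∀ r : ℝ, 0 ≤ r → ∀ x : X, ∃ m₀ : ℕ,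
      {h : G | dist x (h • x) ≤ r ∧
        dist (g ^ m₀ • x) (h • (g ^ m₀ • x)) ≤ r}.Finite) :
    -- uniform WPD for all large exponents
    ∀ r : ℝ, 0 ≤ r → ∀ x : X, ∃ m₀ : ℕ, ∀ m : ℕ, m₀ ≤ m →
      {h : G | dist x (h • x) ≤ r ∧
        dist (g ^ m • x) (h • (g ^ m • x)) ≤ r}.Finite :=
  wpd_single_implies_uniform_general hiso g hqi hMorse hWPD
end

section
/- The suspension of the simplicial real line (the triangle complex obtained by suspending ℝ with its standard simplicial structure, with two apices n and s) does not satisfy any isoperimetric inequality: for every n ∈ ℕ there is an embedded loop of length 4 (a geodesic bigon between the two apices) requiring at least n triangles to fill. -/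
open SimpleGraph

/-- An elementary triangle move between walks from `a` to `b`. -/
def ElemTri {V : Type*} [DecidableEq V] (Γ : SimpleGraph V) (T : Set (Finset V)) {a b : V}
    (p q : Γ.Walk a b) : Prop :=
  ∃ (v : V) (h₁ : Γ.Adj a v) (h₂ : Γ.Adj v b) (h₃ : Γ.Adj a b),
    ({a, v, b} : Finset V) ∈ T ∧
    ((p = Walk.cons h₁ (Walk.cons h₂ Walk.nil) ∧ q = Walk.cons h₃ Walk.nil) ∨
     (q = Walk.cons h₁ (Walk.cons h₂ Walk.nil) ∧ p = Walk.cons h₃ Walk.nil))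

/-- A free (backtrack) move between walks from `a` to `b`. -/
def ElemBack {V : Type*} (Γ : SimpleGraph V) {a b : V} (p q : Γ.Walk a b) : Prop :=
  (∃ (v : V) (h : Γ.Adj a v) (q' : Γ.Walk a b),
      p = Walk.cons h (Walk.cons h.symm q') ∧ q = q') ∨
  (∃ (v : V) (h : Γ.Adj a v) (p' : Γ.Walk a b),
      q = Walk.cons h (Walk.cons h.symm p') ∧ p = p')

/-- One step of combinatorial homotopy across `n` triangles, inside a walk. -/
def HomotopyStep {V : Type*} [DecidableEq V] (Γ : SimpleGraph V) (T : Set (Finset V)) (n : ℕ)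
    {x y : V} (p q : Γ.Walk x y) : Prop :=
  ∃ (a b : V) (r : Γ.Walk x a) (s : Γ.Walk b y) (p₁ q₁ : Γ.Walk a b),
    p = r.append (p₁.append s) ∧ q = r.append (q₁.append s) ∧
    ((n = 1 ∧ ElemTri Γ T p₁ q₁) ∨ (n = 0 ∧ ElemBack Γ p₁ q₁))

/-- `FillRel Γ T p q n`: `p` can be transformed into `q` by a combinatorial
homotopy of area `n`. -/
inductive FillRel {V : Type*} [DecidableEq V] (Γ : SimpleGraph V) (T : Set (Finset V)) :
    ∀ {x y : V}, Γ.Walk x y → Γ.Walk x y → ℕ → Prop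
  | refl {x y : V} (p : Γ.Walk x y) : FillRel Γ T p p 0
  | step {x y : V} {p q r : Γ.Walk x y} {m n : ℕ} :
      HomotopyStep Γ T m p q → FillRel Γ T q r n → FillRel Γ T p r (m + n)

/-- The 1-skeleton of the suspension of the simplicial real line:
vertices are `ℤ` (the line) together with two apices `Sum.inr true` (north) and
`Sum.inr false` (south); each apex is joined to every vertex of the line. -/
def suspLine : SimpleGraph (ℤ ⊕ Bool) where
  Adj x y :=
    match x, y with
    | Sum.inl k, Sum.inl l => k = l + 1 ∨ l = k + 1
    | Sum.inl _, Sum.inr _ => True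
    | Sum.inr _, Sum.inl _ => True
    | Sum.inr _, Sum.inr _ => False
  symm := by
    refine ⟨fun x y h => ?_⟩
    cases x <;> cases y <;> simp_all <;> tauto
  loopless := by
    refine ⟨fun x h => ?_⟩
    cases x with
    | inl k => rcases h with h | h <;> omega
    | inr e => exact h

/-- The triangles of the suspension of the simplicial line. -/
def suspLineTriangles : Set (Finset (ℤ ⊕ Bool)) :=
  {t | ∃ (e : Bool) (k : ℤ),
    t = {Sum.inr e, Sum.inl k, Sum.inl (k + 1)}}

/-!
The proof is a cochain argument. Give every oriented edge of a graph an integer weight `c` with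
`c y x = -c x y`, and let the weight of a walk be the sum over its darts. Backtracking does not
change the weight, and replacing one side of a triangle by the other two changes it by the
coboundary of `c` on that triangle; so if the coboundary is at most `B` on every triangle, a
filling of area `m` changes the weight by at most `B * m`. On the suspension of the line, the
weight `c(n, k) = -k`, `c(s, k) = k` (and `0` on the line) has coboundary `±1` on every triangle,
while the bigon `n → 0 → s → k → n` has weight `2k`, so it needs at least `2|k|` triangles.
-/

namespace SimpleGraph

variable {V : Type*} {Γ : SimpleGraph V}

def Walk.cochainSum (c : V → V → ℤ) {a b : V} (p : Γ.Walk a b) : ℤ :=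
  (p.darts.map fun d => c d.fst d.snd).sum

def CoboundaryLE [DecidableEq V] (T : Set (Finset V)) (c : V → V → ℤ) (B : ℤ) : Prop :=
  ∀ a v b, ({a, v, b} : Finset V) ∈ T → |c a v + c v b - c a b| ≤ B

namespace Walk

variable (c : V → V → ℤ)

@[simp]
theorem cochainSum_nil {a : V} : (nil : Γ.Walk a a).cochainSum c = 0 := rfl

@[simp]
theorem cochainSum_cons {a b d : V} (h : Γ.Adj a b) (p : Γ.Walk b d) :
    (cons h p).cochainSum c = c a b + p.cochainSum c := rfl

@[simp]
theorem cochainSum_append {a b d : V} (p : Γ.Walk a b) (q : Γ.Walk b d) :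
    (p.append q).cochainSum c = p.cochainSum c + q.cochainSum c := by
  simp [cochainSum]

variable {c}

theorem cochainSum_eq_of_elemBack (hc : ∀ x y, c y x = -c x y) {a b : V} {p q : Γ.Walk a b}
    (h : ElemBack Γ p q) : p.cochainSum c = q.cochainSum c := by
  rcases h with ⟨v, h, q', rfl, rfl⟩ | ⟨v, h, p', rfl, rfl⟩ <;> simp [hc a v]

variable [DecidableEq V] {T : Set (Finset V)} {B : ℤ}

theorem abs_cochainSum_sub_le_of_elemTri
    (hT : CoboundaryLE T c B)
    {a b : V} {p q : Γ.Walk a b} (h : ElemTri Γ T p q) :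
    |p.cochainSum c - q.cochainSum c| ≤ B := by
  obtain ⟨v, h₁, h₂, h₃, hmem, ⟨rfl, rfl⟩ | ⟨rfl, rfl⟩⟩ := h
  · simpa [add_assoc] using hT a v b hmem
  · simpa [abs_sub_comm, add_assoc] using hT a v b hmem

theorem abs_cochainSum_sub_le_of_homotopyStep (hc : ∀ x y, c y x = -c x y)
    (hT : CoboundaryLE T c B)
    {x y : V} {p q : Γ.Walk x y} {n : ℕ} (h : HomotopyStep Γ T n p q) :
    |p.cochainSum c - q.cochainSum c| ≤ B * n := by
  obtain ⟨a, b, r, s, p₁, q₁, rfl, rfl, ⟨rfl, htri⟩ | ⟨rfl, hback⟩⟩ := h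
  · simpa using abs_cochainSum_sub_le_of_elemTri hT htri
  · simp [cochainSum_eq_of_elemBack hc hback]

theorem abs_cochainSum_sub_le_of_fillRel (hc : ∀ x y, c y x = -c x y)
    (hT : CoboundaryLE T c B)
    {x y : V} {p q : Γ.Walk x y} {m : ℕ} (h : FillRel Γ T p q m) :
    |p.cochainSum c - q.cochainSum c| ≤ B * m := by
  induction h with
  | refl p => simp
  | @step p q r m n hstep _ ih =>
    calc |p.cochainSum c - r.cochainSum c|
        ≤ |p.cochainSum c - q.cochainSum c| + |q.cochainSum c - r.cochainSum c| :=
          abs_sub_le _ _ _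
      _ ≤ B * m + B * n := add_le_add (abs_cochainSum_sub_le_of_homotopyStep hc hT hstep) ih
      _ = B * ↑(m + n) := by push_cast; ring

end Walk

end SimpleGraph

def suspLineCochain : ℤ ⊕ Bool → ℤ ⊕ Bool → ℤ
  | Sum.inr true, Sum.inl k => -k
  | Sum.inl k, Sum.inr true => k
  | Sum.inr false, Sum.inl k => k
  | Sum.inl k, Sum.inr false => -k
  | _, _ => 0

theorem suspLineCochain_swap (x y : ℤ ⊕ Bool) : suspLineCochain y x = -suspLineCochain x y := by
  rcases x with k | (_ | _) <;> rcases y with l | (_ | _) <;> simp [suspLineCochain]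

theorem suspLineCochain_coboundaryLE_one :
    CoboundaryLE suspLineTriangles suspLineCochain 1 := by
  intro a v b ⟨e, k, ht⟩
  have hvert : ∀ x ∈ ({a, v, b} : Finset (ℤ ⊕ Bool)),
      x = Sum.inr e ∨ x = Sum.inl k ∨ x = Sum.inl (k + 1) := by
    simp [ht]
  obtain ha | ha | ha := hvert a (by simp) <;> obtain hv | hv | hv := hvert v (by simp) <;>
    obtain hb | hb | hb := hvert b (by simp) <;> subst ha hv hb <;> cases e <;>
    simp [suspLineCochain]

theorem suspLine_adj_inl_inr (k : ℤ) (e : Bool) : suspLine.Adj (Sum.inl k) (Sum.inr e) := trivial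

theorem suspLine_adj_inr_inl (e : Bool) (k : ℤ) : suspLine.Adj (Sum.inr e) (Sum.inl k) := trivial

def suspLineBigon (k : ℤ) : suspLine.Walk (Sum.inr true) (Sum.inr true) :=
  .cons (suspLine_adj_inr_inl true 0) <| .cons (suspLine_adj_inl_inr 0 false) <|
    .cons (suspLine_adj_inr_inl false k) <| .cons (suspLine_adj_inl_inr k true) .nil

theorem suspLineBigon_length (k : ℤ) : (suspLineBigon k).length = 4 := rfl

theorem suspLineBigon_isCycle {k : ℤ} (hk : k ≠ 0) : (suspLineBigon k).IsCycle := by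
  rw [Walk.isCycle_def]
  simpa [suspLineBigon] using hk.symm

theorem suspLineBigon_cochainSum (k : ℤ) :
    (suspLineBigon k).cochainSum suspLineCochain = 2 * k := by
  simp [suspLineBigon, suspLineCochain]
  ring

/-- The suspension of the simplicial real line satisfies no isoperimetric
inequality: for every `n` there is an embedded loop of length `4` (a geodesic
bigon between the two apices) requiring at least `n` triangles to fill. -/
theorem suspension_no_isoperimetric_inequality :
    ∀ n : ℕ, ∃ (x : ℤ ⊕ Bool) (p : suspLine.Walk x x),
      p.IsCycle ∧ p.length = 4 ∧
      ∀ m : ℕ, FillRel suspLine suspLineTriangles p Walk.nil m → n ≤ m := by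
  intro n
  refine ⟨_, suspLineBigon (n + 1), suspLineBigon_isCycle (by omega),
    suspLineBigon_length _, fun m hfill => ?_⟩
  have h := Walk.abs_cochainSum_sub_le_of_fillRel suspLineCochain_swap
    suspLineCochain_coboundaryLE_one hfill
  rw [suspLineBigon_cochainSum, Walk.cochainSum_nil, sub_zero, one_mul, abs_le] at h
  omega
end

section
/- Let T be a simplicial tree and G a group acting on T. Suppose e and e' are distinct edges of T such that the pointwise stabilizer of {e, e'} in G is finite, and suppose g ∈ G is a hyperbolic isometry whose axis contains both e and e'. Then for any vertex v on the segment between e and e', the common stabilizer of v and gᵐv is finite for all sufficiently large m. -/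
/-!
Conjugating by a power of `g` slides `v` back along the axis until it lies before both edges,
while `gᵐ v` lies beyond them once `m` is large. In a tree an element fixing two vertices fixes
the geodesic between them, so the common stabiliser of `v` and `gᵐ v` is conjugate to a subgroup
of the pointwise stabiliser of `e` and `e'`, hence finite.
-/

namespace SimpleGraph

variable {V W : Type*} {Γ : SimpleGraph V} {Δ : SimpleGraph W}

theorem Hom.dist_map_le (f : Γ →g Δ) {u w : V} (h : Γ.Reachable u w) :
    Δ.dist (f u) (f w) ≤ Γ.dist u w := by
  obtain ⟨p, hp⟩ := h.exists_walk_length_eq_dist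
  simpa [hp] using Δ.dist_le (p.map f)

theorem Iso.dist_map (f : Γ ≃g Δ) (u w : V) : Δ.dist (f u) (f w) = Γ.dist u w := by
  by_cases h : Γ.Reachable u w
  · refine le_antisymm (f.toHom.dist_map_le h) ?_
    simpa using f.symm.toHom.dist_map_le (h.map f.toHom)
  · have h' : ¬Δ.Reachable (f u) (f w) := fun h' => h (by simpa using h'.map f.symm.toHom)
    rw [dist_eq_zero_of_not_reachable h', dist_eq_zero_of_not_reachable h]

theorem IsTree.eq_of_dist_add_dist_eq (hT : Γ.IsTree) {u w x y : V}
    (hx : Γ.dist u x + Γ.dist x w = Γ.dist u w) (hy : Γ.dist u y + Γ.dist y w = Γ.dist u w)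
    (hxy : Γ.dist u x = Γ.dist u y) : x = y := by
  obtain ⟨p₁, hp₁⟩ := (hT.connected u x).exists_walk_length_eq_dist
  obtain ⟨q₁, hq₁⟩ := (hT.connected x w).exists_walk_length_eq_dist
  obtain ⟨p₂, hp₂⟩ := (hT.connected u y).exists_walk_length_eq_dist
  obtain ⟨q₂, hq₂⟩ := (hT.connected y w).exists_walk_length_eq_dist
  have hpath₁ := (p₁.append q₁).isPath_of_length_eq_dist (by simp [hp₁, hq₁, hx])
  have hpath₂ := (p₂.append q₂).isPath_of_length_eq_dist (by simp [hp₂, hq₂, hy])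
  have hsame : p₁.append q₁ = p₂.append q₂ :=
    congrArg Subtype.val ((hT.isAcyclic.subsingleton_path u w).elim ⟨_, hpath₁⟩ ⟨_, hpath₂⟩)
  calc x = (p₁.append q₁).getVert p₁.length := by simp [Walk.getVert_append]
    _ = (p₂.append q₂).getVert p₂.length := by rw [hsame, hp₁, hp₂, hxy]
    _ = y := by simp [Walk.getVert_append]

theorem IsTree.apply_eq_self_of_dist_add_dist_eq (hT : Γ.IsTree) {f : V → V}
    (hf : ∀ u w, Γ.dist (f u) (f w) = Γ.dist u w) {u w x : V} (hu : f u = u) (hw : f w = w)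
    (hx : Γ.dist u x + Γ.dist x w = Γ.dist u w) : f x = x :=
  have hux : Γ.dist u (f x) = Γ.dist u x := by rw [← hf u x, hu]
  have hxw : Γ.dist (f x) w = Γ.dist x w := by rw [← hf x w, hw]
  hT.eq_of_dist_add_dist_eq (by rwa [hux, hxw]) hx hux

theorem IsTree.apply_eq_self_of_mem_Icc (hT : Γ.IsTree) {f : V → V}
    (hf : ∀ u w, Γ.dist (f u) (f w) = Γ.dist u w) {L : ℤ → V}
    (hline : ∀ i j : ℤ, Γ.dist (L i) (L j) = (i - j).natAbs) {p q i : ℤ} (hi : i ∈ Set.Icc p q)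
    (hp : f (L p) = L p) (hq : f (L q) = L q) : f (L i) = L i :=
  hT.apply_eq_self_of_dist_add_dist_eq hf hp hq (by simp only [hline]; have := hi.1; have := hi.2; omega)

end SimpleGraph

section Action

variable {V G : Type*} [Group G] [MulAction G V]

def SimpleGraph.smulIso {Γ : SimpleGraph V}
    (hact : ∀ (k : G) (u w : V), Γ.Adj u w → Γ.Adj (k • u) (k • w)) (k : G) : Γ ≃g Γ where
  toEquiv := MulAction.toPerm k
  map_rel_iff' {u w} := ⟨fun h => by simpa using hact k⁻¹ _ _ h, hact k u w⟩

theorem pow_smul_eq_of_smul_eq_add {g : G} {L : ℤ → V} {t : ℤ} (htrans : ∀ i, g • L i = L (i + t))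
    (n : ℕ) (i : ℤ) : g ^ n • L i = L (i + n * t) := by
  induction n generalizing i with
  | zero => simp
  | succ n ih => rw [pow_succ, mul_smul, htrans, ih]; congr 1; push_cast; ring

theorem finite_fixing_smul_pair (h : G) {x y : V}
    (hfin : {k : G | k • x = x ∧ k • y = y}.Finite) :
    {k : G | k • h • x = h • x ∧ k • h • y = h • y}.Finite := by
  refine (hfin.image fun k => h * k * h⁻¹).subset fun k ⟨hkx, hky⟩ => ⟨h⁻¹ * k * h, ?_, by group⟩
  simp only [Set.mem_ofPred_eq, mul_smul, hkx, hky, inv_smul_smul, and_self]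

end Action

theorem tree_weak_wpd_general {V G : Type*} [Group G] (Γ : SimpleGraph V)
    (hT : Γ.IsTree) [MulAction G V]
    (hact : ∀ (k : G) (u w : V), Γ.Adj u w → Γ.Adj (k • u) (k • w))
    (g : G) (L : ℤ → V)
    (hline : ∀ i j : ℤ, Γ.dist (L i) (L j) = (i - j).natAbs)
    (t : ℤ) (ht : 0 < t)
    (htrans : ∀ i : ℤ, g • L i = L (i + t))
    (a b : ℤ)
    (hstab : {k : G | k • L a = L a ∧ k • L (a + 1) = L (a + 1) ∧
      k • L b = L b ∧ k • L (b + 1) = L (b + 1)}.Finite)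
    (j : ℤ) :
    ∃ M : ℕ, ∀ m : ℕ, M ≤ m →
      {k : G | k • L j = L j ∧ k • (g ^ m • L j) = g ^ m • L j}.Finite := by
  have hfix (k : G) {p q i : ℤ} (hi : i ∈ Set.Icc p q) :=
    hT.apply_eq_self_of_mem_Icc (f := (k • ·)) (SimpleGraph.smulIso hact k).dist_map hline hi
  have hpow := pow_smul_eq_of_smul_eq_add htrans
  set n := (j - min a b).toNat
  set p := j - n * t
  have hp : p ≤ min a b := by nlinarith [Int.self_le_toNat (j - min a b)]
  refine ⟨(max a b + 1 - p).toNat, fun m hm => ?_⟩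
  have hq : max a b + 1 ≤ p + m * t := by
    have : ((max a b + 1 - p).toNat : ℤ) ≤ m := by exact_mod_cast hm
    nlinarith [Int.self_le_toNat (max a b + 1 - p)]
  have hseg : {k : G | k • L p = L p ∧ k • L (p + m * t) = L (p + m * t)}.Finite :=
    hstab.subset fun k ⟨h₁, h₂⟩ => ⟨hfix k ⟨by omega, by omega⟩ h₁ h₂,
      hfix k ⟨by omega, by omega⟩ h₁ h₂, hfix k ⟨by omega, by omega⟩ h₁ h₂,
      hfix k ⟨by omega, by omega⟩ h₁ h₂⟩
  have hv : L j = g ^ n • L p := by rw [hpow, sub_add_cancel]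
  have hgv : g ^ m • L j = g ^ n • L (p + m * t) := by rw [hpow, hpow]; congr 1; ring
  simpa only [hgv, ← hv] using finite_fixing_smul_pair (g ^ n) hseg

/-- Let a group `G` act on a simplicial tree `Γ` by automorphisms. If `g` is a
hyperbolic isometry whose axis `L` (on which `g` translates by `t > 0`) contains
two distinct edges `e = (L a, L (a+1))` and `e' = (L b, L (b+1))` whose common
pointwise stabiliser is finite, then for any vertex `v = L j` on the segment
between `e` and `e'`, the common stabiliser of `v` and `gᵐ v` is finite for all
sufficiently large `m`. -/
theorem tree_weak_wpd {V G : Type*} [Group G] (Γ : SimpleGraph V)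
    (hT : Γ.IsTree) [MulAction G V]
    (hact : ∀ (k : G) (u w : V), Γ.Adj u w → Γ.Adj (k • u) (k • w))
    (g : G) (L : ℤ → V)
    (hline : ∀ i j : ℤ, Γ.dist (L i) (L j) = (i - j).natAbs)
    (t : ℤ) (ht : 0 < t)
    (htrans : ∀ i : ℤ, g • L i = L (i + t))
    (a b : ℤ) (hab : a ≠ b)
    (hedges : Γ.Adj (L a) (L (a + 1)) ∧ Γ.Adj (L b) (L (b + 1)))
    (hstab : {k : G | k • L a = L a ∧ k • L (a + 1) = L (a + 1) ∧
      k • L b = L b ∧ k • L (b + 1) = L (b + 1)}.Finite)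
    (j : ℤ) (hj : min a b ≤ j ∧ j ≤ max a b + 1) :
    ∃ M : ℕ, ∀ m : ℕ, M ≤ m →
      {k : G | k • L j = L j ∧ k • (g ^ m • L j) = g ^ m • L j}.Finite :=
  tree_weak_wpd_general Γ hT hact g L hline t ht htrans a b hstab j
end
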